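/- arXiv:1710.02673 — 10 statements merged into one kernel-verified Lean document; each statement's English description precedes it below -/
import Mathlib

section
/- Let A be a commutative Noetherian ring with total quotient ring T, let \bar{A} be the integral closure of A in T, and let X be an A-submodule of \bar{A} containing A. If X is isomorphic to A as an A-module, then X = A. -/
/-- An integral element whose inverse lies in the image of `A` is itself in the image of `A`. -/
lemma aux_integral_inv_mem {A T : Type*} [CommRing A] [CommRing T] [Algebra A T]
    {x : T} (hx : IsIntegral A x) {a : A} (ha : algebraMap A T a * x = 1) :
    ∃ b : A, algebraMap A T b = x := by
  obtain ⟨p, hm, hp⟩ := hx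
  by_cases hn : p.natDegree = 0
  · have hp1 : p = 1 := (Polynomial.Monic.natDegree_eq_zero hm).mp hn
    rw [hp1, Polynomial.eval₂_one] at hp
    have : Subsingleton T := subsingleton_of_zero_eq_one hp.symm
    exact ⟨0, Subsingleton.elim _ _⟩
  · obtain ⟨m, hm'⟩ : ∃ m, p.natDegree = m + 1 := ⟨p.natDegree - 1, (Nat.succ_pred_eq_of_pos (Nat.pos_of_ne_zero hn)).symm⟩
    set f := algebraMap A T
    -- rewrite the integrality equation as a sum
    have hsum : (0 : T) = ∑ i ∈ Finset.range (p.natDegree + 1), f (p.coeff i) * x ^ i := by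
      rw [← hp, Polynomial.eval₂_eq_sum_range]
    rw [Finset.sum_range_succ, hm.coeff_natDegree, map_one, one_mul] at hsum
    have hxn : x ^ p.natDegree = -∑ i ∈ Finset.range p.natDegree, f (p.coeff i) * x ^ i := by
      linear_combination -hsum
    -- key : x = f (a ^ m) * x ^ (m+1)
    have key : x = f (a ^ m) * x ^ p.natDegree := by
      calc x = x * (f a * x) ^ m := by rw [ha, one_pow, mul_one]
        _ = f (a ^ m) * x ^ p.natDegree := by
            rw [mul_pow, map_pow, hm']
            ring
    refine ⟨-∑ i ∈ Finset.range p.natDegree, a ^ (m - i) * p.coeff i, ?_⟩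
    rw [key, hxn, map_neg, map_sum, mul_neg, neg_inj, Finset.mul_sum]
    refine Finset.sum_congr rfl fun i hi => ?_
    have hi' : i ≤ m := by
      have := Finset.mem_range.mp hi
      omega
    have hsplit : a ^ m = a ^ (m - i) * a ^ i := by
      rw [← pow_add, Nat.sub_add_cancel hi']
    calc f (a ^ (m - i) * p.coeff i)
        = f (a ^ (m - i)) * f (p.coeff i) * ((f a * x) ^ i) := by rw [ha, one_pow, mul_one, map_mul]
      _ = f (a ^ m) * (f (p.coeff i) * x ^ i) := by
          simp only [hsplit, map_mul, map_pow, mul_pow]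
          ring

/-- If `A ⊆ X ⊆ Ā` (integral closure of `A` in its total quotient ring)
and `X ≅ A` as `A`-modules, then `X = A`. -/
theorem stmt0 (A : Type*) [CommRing A] [IsNoetherianRing A]
    (X : Submodule A (FractionRing A))
    (hAX : ∀ a : A, algebraMap A (FractionRing A) a ∈ X)
    (hXint : (X : Set (FractionRing A)) ⊆ (integralClosure A (FractionRing A) : Set (FractionRing A)))
    (h : Nonempty (X ≃ₗ[A] A)) :
    X = LinearMap.range (Algebra.linearMap A (FractionRing A)) := by
  obtain ⟨e⟩ := h
  set T := FractionRing A
  have h1 : (1 : T) ∈ X := by simpa using hAX 1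
  set x : X := e.symm 1 with hxdef
  -- every element of X is a multiple of x
  have hgen : ∀ y : X, (y : T) = algebraMap A T (e y) * (x : T) := by
    intro y
    have : y = e y • x := by
      rw [hxdef, ← map_smul, smul_eq_mul, mul_one, e.symm_apply_apply]
    conv_lhs => rw [this]
    simp [Algebra.smul_def]
    rfl
  -- 1 is a multiple of x
  have hone : algebraMap A T (e ⟨1, h1⟩) * (x : T) = 1 := (hgen ⟨1, h1⟩).symm
  -- x is integral
  have hxint : IsIntegral A (x : T) := hXint x.2
  obtain ⟨b, hb⟩ := aux_integral_inv_mem hxint hone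
  apply le_antisymm
  · intro y hy
    rw [LinearMap.mem_range]
    refine ⟨e ⟨y, hy⟩ * b, ?_⟩
    have := hgen ⟨y, hy⟩
    simp only [Algebra.linearMap_apply, map_mul, hb]
    exact this.symm
  · rintro y ⟨a, rfl⟩
    exact hAX a
end

section
/- Let A be a one-dimensional Cohen--Macaulay local ring that is generically Gorenstein, and let I be an ideal of A containing a non-zerodivisor such that the natural map A \to Hom_A(I, I) is an isomorphism. If I is reflexive, then I is isomorphic to A as an A-module. -/
open IsLocalRing

lemma not_mem_minimalPrimes_of_mem_nonZeroDivisors {R : Type*} [CommRing R] {q : Ideal R}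
    (hq : q ∈ minimalPrimes R) {s : R} (hs : s ∈ nonZeroDivisors R) : s ∉ q := by
  haveI hqp : q.IsPrime := hq.1.1
  intro hsq
  have h1 : algebraMap R (Localization q.primeCompl) s ∈ IsLocalRing.maximalIdeal _ :=
    (IsLocalization.AtPrime.to_map_mem_maximal_iff _ q s).mpr hsq
  exact notMem_nonZeroDivisors_of_mem_mem_minimalPrimes hsq hq hs

lemma exists_socle_elt {A : Type*} [CommRing A] [IsNoetherianRing A] [IsLocalRing A]
    (hdim : ringKrullDim A = 1) {s : A} (hsm : s ∈ maximalIdeal A) (hs : s ∈ nonZeroDivisors A) :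
    ∃ y : A, y ∉ Ideal.span {s} ∧ ∀ c ∈ maximalIdeal A, c * y ∈ Ideal.span {s} := by
  set S : Ideal A := Ideal.span {s} with hS
  have hSle : S ≤ maximalIdeal A := by
    rw [hS, Ideal.span_le, Set.singleton_subset_iff]; exact hsm
  have hSne : S ≠ ⊤ := fun h => (maximalIdeal.isMaximal A).ne_top (top_le_iff.mp (h ▸ hSle))
  haveI := Ideal.Quotient.nontrivial_iff.mpr hSne
  obtain ⟨p, hp⟩ := associatedPrimes.nonempty A (A ⧸ S)
  obtain ⟨hpprime, x, hpann⟩ := isAssociatedPrime_iff.mp hp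
  rw [Submodule.bot_colon'] at hpann
  obtain ⟨y, rfl⟩ := Ideal.Quotient.mk_surjective x
  have hxne : Ideal.Quotient.mk S y ≠ 0 := by
    intro h
    rw [h] at hpann
    simp only [Submodule.span_zero_singleton, Submodule.annihilator_bot] at hpann
    exact hpprime.ne_top hpann
  have hyS : y ∉ S := fun h => hxne (Ideal.Quotient.eq_zero_iff_mem.mpr h)
  have hsmul : ∀ c : A, c • (Ideal.Quotient.mk S y) = Ideal.Quotient.mk S (c * y) := by
    intro c
    rw [Algebra.smul_def]
    rfl
  have hsp : s ∈ p := by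
    rw [hpann, Submodule.mem_annihilator_span_singleton, hsmul,
      Ideal.Quotient.eq_zero_iff_mem]
    exact S.mul_mem_right y (Ideal.mem_span_singleton_self s)
  -- p = maximal ideal
  have hpm : p = maximalIdeal A := by
    by_contra hne
    have hplt : p < maximalIdeal A := lt_of_le_of_ne (le_maximalIdeal hpprime.ne_top) hne
    obtain ⟨q, hq, hqle⟩ := Ideal.exists_minimalPrimes_le (I := ⊥) (J := p) bot_le
    have hqmin : q ∈ minimalPrimes A := hq
    have hqlt : q < p := lt_of_le_of_ne hqle
      (fun h => not_mem_minimalPrimes_of_mem_nonZeroDivisors hqmin hs (h ▸ hsp))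
    haveI := hqmin.1.1
    let Q : PrimeSpectrum A := ⟨q, hqmin.1.1⟩
    let P : PrimeSpectrum A := ⟨p, hpprime⟩
    let Mx : PrimeSpectrum A := ⟨maximalIdeal A, (maximalIdeal.isMaximal A).isPrime⟩
    let c : LTSeries (PrimeSpectrum A) :=
      ((RelSeries.singleton _ Q).snoc P (by rw [RelSeries.last_singleton]; exact hqlt)).snoc Mx
        (by rw [RelSeries.last_snoc]; exact hplt)
    have hlen : c.length = 2 := by simp [c]
    have := Order.LTSeries.length_le_krullDim c
    rw [hlen] at this
    rw [show ringKrullDim A = Order.krullDim (PrimeSpectrum A) from rfl] at hdim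
    rw [hdim] at this
    norm_num at this
  refine ⟨y, hyS, fun c hc => ?_⟩
  rw [← hpm] at hc
  rw [hpann, Submodule.mem_annihilator_span_singleton, hsmul,
    Ideal.Quotient.eq_zero_iff_mem] at hc
  exact hc


/-- `M` is a maximal Cohen–Macaulay module over the one-dimensional local ring `R`:
finitely generated and some element of the maximal ideal acts regularly on `M`
(equivalently, `M = 0` or `depth M = 1`). -/
def IsMCM (R : Type*) [CommRing R] [IsLocalRing R] (M : Type*) [AddCommGroup M] [Module R M] : Prop :=
  Module.Finite R M ∧ ∃ x ∈ maximalIdeal R, IsSMulRegular M x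

/-- `R` is a direct summand of `M`, i.e. `M` has a nonzero free direct summand. -/
def HasFreeSummand (R : Type*) [CommRing R] (M : Type*) [AddCommGroup M] [Module R M] : Prop :=
  ∃ (p : M →ₗ[R] R) (s : R →ₗ[R] M), p ∘ₗ s = LinearMap.id

/-- `M` is a first syzygy of a maximal Cohen–Macaulay module: there is an exact
sequence `0 → M → Rⁿ → N → 0` with `N` maximal Cohen–Macaulay. -/
def IsSyzygyOfMCM (R : Type*) [CommRing R] [IsLocalRing R] (M : Type*) [AddCommGroup M] [Module R M] : Prop :=
  ∃ (n : ℕ) (f : M →ₗ[R] (Fin n → R)), Function.Injective f ∧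
    IsMCM R ((Fin n → R) ⧸ LinearMap.range f)

/-- `R` is generically Gorenstein: the localization at each minimal prime is a
(zero-dimensional) Gorenstein, i.e. self-injective, local ring. -/
def GenericallyGorenstein (R : Type*) [CommRing R] : Prop :=
  ∀ p ∈ minimalPrimes R, ∀ (hp : p.IsPrime),
    letI := hp
    Module.Injective (Localization.AtPrime p) (Localization.AtPrime p)


/-- over a one-dimensional CM generically Gorenstein local ring, a reflexive
ideal containing a nonzerodivisor all of whose endomorphisms are multiplications by ring
elements (uniquely) is isomorphic to the ring. -/
theorem stmt1 (A : Type*) [CommRing A] [IsNoetherianRing A] [IsLocalRing A]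
    (hdim : ringKrullDim A = 1)
    (hdepth : ∃ x ∈ maximalIdeal A, x ∈ nonZeroDivisors A)
    (hGor : GenericallyGorenstein A)
    (I : Ideal A) (hreg : ∃ x ∈ I, x ∈ nonZeroDivisors A)
    (hEnd : ∀ f : I →ₗ[A] I, ∃! a : A, ∀ x : I, f x = a • x)
    (hrefl : Module.IsReflexive A I) :
    Nonempty (I ≃ₗ[A] A) := by
  obtain ⟨t, htI, ht⟩ := hreg
  set tI : ↥I := ⟨t, htI⟩ with htIdef
  by_cases htr : ∀ (f : ↥I →ₗ[A] A) (z : ↥I), f z ∈ maximalIdeal A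
  · exfalso
    obtain ⟨s, hsm, hs⟩ := hdepth
    obtain ⟨y, hyS, hym⟩ := exists_socle_elt hdim hsm hs
    have hcancel : ∀ a b : A, s * a = s * b → a = b := fun a b hab =>
      (mul_cancel_left_mem_nonZeroDivisors hs).mp hab
    have key : ∀ z : ↥I, ∃ u : ↥I, ∀ f : Module.Dual A ↥I, s * f u = y * f z := by
      intro z
      have hw : ∀ f : Module.Dual A ↥I, ∃ w : A, s * w = y * f z := by
        intro f
        have h1 : y * f z ∈ Ideal.span {s} := by
          rw [mul_comm]; exact hym _ (htr f z)
        rw [Ideal.mem_span_singleton] at h1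
        obtain ⟨w, hw⟩ := h1
        exact ⟨w, hw.symm⟩
      choose w hwspec using hw
      let η : Module.Dual A (Module.Dual A ↥I) :=
        { toFun := w
          map_add' := fun f g => hcancel _ _ (by
            rw [hwspec, mul_add, hwspec, hwspec, LinearMap.add_apply, mul_add])
          map_smul' := fun c f => hcancel _ _ (by
            rw [hwspec, RingHom.id_apply, smul_eq_mul, mul_left_comm, hwspec,
              LinearMap.smul_apply, smul_eq_mul, mul_left_comm]) }
      obtain ⟨u, hu⟩ := (Module.bijective_dual_eval A ↥I).2 η
      refine ⟨u, fun f => ?_⟩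
      have hfu : f u = w f := LinearMap.congr_fun hu f
      rw [hfu, hwspec]
    choose u hu using key
    have hinj : ∀ a b : ↥I, (∀ f : Module.Dual A ↥I, f a = f b) → a = b := by
      intro a b h
      apply (Module.bijective_dual_eval A ↥I).1
      ext f
      exact h f
    have hadd : ∀ z z' : ↥I, u (z + z') = u z + u z' := by
      intro z z'
      refine hinj _ _ (fun f => hcancel _ _ ?_)
      calc s * f (u (z + z')) = y * f (z + z') := hu _ f
        _ = y * (f z + f z') := by rw [map_add]
        _ = y * f z + y * f z' := mul_add y _ _
        _ = s * f (u z) + s * f (u z') := by rw [hu, hu]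
        _ = s * (f (u z) + f (u z')) := (mul_add s _ _).symm
        _ = s * f (u z + u z') := by rw [map_add]
    have hsmul : ∀ (c : A) (z : ↥I), u (c • z) = c • u z := by
      intro c z
      refine hinj _ _ (fun f => hcancel _ _ ?_)
      calc s * f (u (c • z)) = y * f (c • z) := hu _ f
        _ = y * (c * f z) := by rw [map_smul, smul_eq_mul]
        _ = c * (y * f z) := mul_left_comm y c _
        _ = c * (s * f (u z)) := by rw [hu]
        _ = s * (c * f (u z)) := mul_left_comm c s _
        _ = s * f (c • u z) := by rw [map_smul, smul_eq_mul]
    let h : ↥I →ₗ[A] ↥I :=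
      { toFun := u
        map_add' := hadd
        map_smul' := hsmul }
    obtain ⟨a, ha, -⟩ := hEnd h
    have hua : u tI = a • tI := ha tI
    have h1 : s * (I.subtype (u tI)) = y * (I.subtype tI) := hu tI I.subtype
    rw [hua] at h1
    have h2 : s * (a * t) = y * t := by simpa [htIdef] using h1
    have h3 : (s * a - y) * t = 0 := by ring_nf; linear_combination h2
    have h4 : s * a - y = 0 := (mem_nonZeroDivisors_iff_right.mp ht) _ h3
    have h5 : y = s * a := (sub_eq_zero.mp h4).symm
    exact hyS (Ideal.mem_span_singleton.mpr ⟨a, h5⟩)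
  · push_neg at htr
    obtain ⟨f, z, hz⟩ := htr
    have hunit : IsUnit (f z) := by
      by_contra hne
      exact hz hne
    obtain ⟨v, hv⟩ := hunit.exists_left_inv
    set f' : ↥I →ₗ[A] A := v • f with hf'def
    have hfz : f' z = 1 := by rw [hf'def, LinearMap.smul_apply, smul_eq_mul, hv]
    set e : ↥I →ₗ[A] ↥I := (LinearMap.toSpanSingleton A ↥I z).comp f' with hedef
    have he : ∀ w : ↥I, e w = f' w • z := fun w => rfl
    obtain ⟨a, ha, hauniq⟩ := hEnd e
    have hee : ∀ w, e (e w) = e w := by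
      intro w
      rw [he w, he (f' w • z), map_smul, hfz, smul_eq_mul, mul_one]
    have haa : a * a = a := by
      refine hauniq (a * a) (fun w => ?_)
      rw [← hee w, ha (e w), ha w, smul_smul]
    rcases isUnit_or_isUnit_one_sub_self a with hua | hua
    · have ha1 : a = 1 := hua.mul_left_cancel (by rw [haa, mul_one])
      have hid : ∀ w : ↥I, f' w • z = w := fun w => by rw [← he, ha, ha1, one_smul]
      have hinj : Function.Injective f' := by
        intro w w' hww
        rw [← hid w, ← hid w', hww]
      have hsurj : Function.Surjective f' := fun b =>
        ⟨b • z, by rw [map_smul, hfz, smul_eq_mul, mul_one]⟩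
      exact ⟨LinearEquiv.ofBijective f' ⟨hinj, hsurj⟩⟩
    · exfalso
      have ha0 : a = 0 := hua.mul_left_cancel (by rw [mul_zero, sub_mul, one_mul, haa, sub_self])
      have hz0 : z = 0 := by
        have := ha z
        rw [he, hfz, one_smul, ha0, zero_smul] at this
        exact this
      rw [hz0, map_zero] at hfz
      exact zero_ne_one hfz
end

section
/- Let (R, m) be a Noetherian local ring and M a finitely generated R-module with a minimal free resolution. Then the first syzygy of M (the kernel of a minimal free cover F \to M) has no nonzero free direct summand, provided M is a maximal Cohen--Macaulay module over a one-dimensional Cohen--Macaulay local singular ring R. -/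
open IsLocalRing

section AuxLemmas
variable {R : Type*} [CommRing R]

lemma aux_no_chain (hdim : ringKrullDim R = 1) {q p P : Ideal R}
    (hq : q.IsPrime) (hp : p.IsPrime) (hP : P.IsPrime) (h1 : q < p) (h2 : p < P) : False := by
  let c : LTSeries (PrimeSpectrum R) :=
    ⟨2, ![⟨q, hq⟩, ⟨p, hp⟩, ⟨P, hP⟩], by
      intro i
      fin_cases i
      · exact h1
      · exact h2⟩
  have := Order.LTSeries.length_le_krullDim c
  rw [show Order.krullDim (PrimeSpectrum R) = ringKrullDim R from rfl, hdim] at this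
  norm_num [c] at this

lemma aux_nzd_not_mem_minimal {q : Ideal R} (hqmin : q ∈ minimalPrimes R) (hq : q.IsPrime)
    {z : R} (hz : z ∈ nonZeroDivisors R) (hzq : z ∈ q) : False := by
  haveI := hq
  have h1 : IsNilpotent (algebraMap R (Localization q.primeCompl) z) := by
    exact (notMem_nonZeroDivisors_of_mem_mem_minimalPrimes hzq hqmin hz).elim
  obtain ⟨k, hk⟩ := h1
  rw [← map_pow] at hk
  obtain ⟨⟨s, hs⟩, h0⟩ := (IsLocalization.map_eq_zero_iff q.primeCompl _ _).mp hk
  have hzk : z ^ k ∈ nonZeroDivisors R := pow_mem hz k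
  have : s = 0 := (mul_right_mem_nonZeroDivisors_eq_zero_iff hzk).mp h0
  exact hs (this ▸ q.zero_mem)

variable [IsNoetherianRing R] [IsLocalRing R]

/-- Existence of an element of the maximal ideal regular on both `R` and `M`. -/
lemma aux_exists_reg (hdim : ringKrullDim R = 1)
    (M : Type*) [AddCommGroup M] [Module R M]
    {x : R} (hx1 : x ∈ maximalIdeal R) (hx : x ∈ nonZeroDivisors R)
    {y : R} (hy1 : y ∈ maximalIdeal R) (hy : IsSMulRegular M y) :
    ∃ z ∈ maximalIdeal R, z ∈ nonZeroDivisors R ∧ IsSMulRegular M z := by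
  by_contra hcon
  push_neg at hcon
  -- every element of the maximal ideal is a zerodivisor on `R × M`
  have hZD : (maximalIdeal R : Set R) ⊆ { r : R | ∃ w : R × M, w ≠ 0 ∧ r • w = 0 } := by
    intro z hz
    rcases Classical.em (z ∈ nonZeroDivisors R) with hz1 | hz1
    · have hz2 := hcon z hz hz1
      rw [IsSMulRegular] at hz2
      rw [Function.not_injective_iff] at hz2
      obtain ⟨u, v, huv, hne⟩ := hz2
      refine ⟨(0, u - v), ?_, ?_⟩
      · simp only [ne_eq, Prod.mk_eq_zero, not_and]
        intro _; exact fun h => hne (sub_eq_zero.mp h)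
      · have : z • (u - v) = 0 := by rw [smul_sub, huv, sub_self]
        simp [Prod.smul_mk, this]
    · rw [mem_nonZeroDivisors_iff_right] at hz1
      push_neg at hz1
      obtain ⟨a, ha0, ha⟩ := hz1
      refine ⟨(a, 0), by simp [Prod.ext_iff]; intro h; exact ha (h ▸ by simp), ?_⟩
      · have h2 : z • a = 0 := by rw [smul_eq_mul, mul_comm]; exact ha0
        exact Prod.ext (by simpa using h2) (by simp)
  have hZD' : (maximalIdeal R : Set R) ⊆ ⋃ p ∈ associatedPrimes R (R × M), (p : Set R) := by
    rw [biUnion_associatedPrimes_eq_zero_divisors]; exact hZD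
  -- every associated prime of `R × M` is a minimal prime
  have hAssMin : associatedPrimes R (R × M) ⊆ minimalPrimes R := by
    intro q hqass
    have hqp : q.IsPrime := hqass.1
    obtain ⟨w, hw⟩ := (isAssociatedPrime_iff.mp hqass).2
    have hqm : q ≠ maximalIdeal R := by
      rintro rfl
      have hxw : x • w = 0 := by
        have : x ∈ (Submodule.span R {w}).annihilator := (Submodule.mem_annihilator_span_singleton w x).mpr ((Submodule.mem_bot R).mp (Submodule.mem_colon_singleton.mp (hw ▸ hx1 : x ∈ (⊥ : Submodule R (R × M)).colon {w})))
        exact (Submodule.mem_annihilator_span_singleton w x).mp this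
      have hyw : y • w = 0 := by
        have : y ∈ (Submodule.span R {w}).annihilator := (Submodule.mem_annihilator_span_singleton w y).mpr ((Submodule.mem_bot R).mp (Submodule.mem_colon_singleton.mp (hw ▸ hy1 : y ∈ (⊥ : Submodule R (R × M)).colon {w})))
        exact (Submodule.mem_annihilator_span_singleton w y).mp this
      have hw1 : w.1 = 0 := by
        have := congrArg Prod.fst hxw
        simp only [Prod.smul_fst, smul_eq_mul, Prod.fst_zero] at this
        exact (mul_right_mem_nonZeroDivisors_eq_zero_iff hx).mp (by rwa [mul_comm] at this)
      have hw2 : w.2 = 0 := by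
        have := congrArg Prod.snd hyw
        simp only [Prod.smul_snd, Prod.snd_zero] at this
        exact hy (this.trans (smul_zero y).symm)
      have hw0 : w = 0 := Prod.ext hw1 hw2
      have : (maximalIdeal R) = ⊤ := by
        rw [hw, hw0]
        simp [Submodule.span_zero_singleton, Submodule.annihilator_bot]
      exact hqp.ne_top this
    have hqle : q < maximalIdeal R :=
      lt_of_le_of_ne (le_maximalIdeal hqp.ne_top) hqm
    obtain ⟨q', hq'min, hq'le⟩ := Ideal.exists_minimalPrimes_le (bot_le : ⊥ ≤ q)
    rcases eq_or_lt_of_le hq'le with rfl | hlt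
    · exact hq'min
    · exact absurd (aux_no_chain hdim hq'min.1.1 hqp
        (maximalIdeal.isMaximal R).isPrime hlt hqle) id
  -- prime avoidance over the (finitely many) minimal primes
  classical
  have hfin := minimalPrimes.finite_of_isNoetherianRing R
  have hsub : (maximalIdeal R : Set R) ⊆ ⋃ i ∈ (↑hfin.toFinset : Set (Ideal R)), (id i : Set R) := by
    intro z hz
    obtain ⟨q, hq, hzq⟩ := Set.mem_iUnion₂.mp (hZD' hz)
    have hqmin := hAssMin hq
    exact Set.mem_biUnion (by simp [hfin.mem_toFinset, hqmin]) hzq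
  have hle := (Ideal.subset_union_prime (⊥ : Ideal R) ⊥ (fun i hi _ _ => by
      have : i ∈ minimalPrimes R := by simpa [hfin.mem_toFinset] using hi
      exact this.1.1)).mp hsub
  obtain ⟨q, hq, hmq⟩ := hle
  have hqmin : q ∈ minimalPrimes R := by simpa [hfin.mem_toFinset] using hq
  exact aux_nzd_not_mem_minimal hqmin hqmin.1.1 hx (hmq hx1)


lemma aux_coord_mem {R : Type*} [CommRing R] {I : Ideal R} {n : ℕ} {v : Fin n → R}
    (hv : v ∈ I • (⊤ : Submodule R (Fin n → R))) (i : Fin n) : v i ∈ I := by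
  refine Submodule.smul_induction_on hv ?_ ?_
  · intro r hr w _
    exact I.mul_mem_right (w i) hr
  · intro x y hx hy
    exact add_mem hx hy

lemma aux_pow_le {R : Type*} [CommRing R] [IsNoetherianRing R] [IsLocalRing R] (hdim : ringKrullDim R = 1)
    {z : R} (hz1 : z ∈ maximalIdeal R) (hz : z ∈ nonZeroDivisors R) :
    ∃ k, maximalIdeal R ^ k ≤ Ideal.span {z} := by
  have hrad : maximalIdeal R ≤ (Ideal.span {z}).radical := by
    rw [Ideal.radical_eq_sInf]
    refine le_sInf ?_
    rintro J ⟨hJz, hJp⟩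
    have hJm : J ≤ maximalIdeal R := le_maximalIdeal hJp.ne_top
    have hzJ : z ∈ J := hJz (Ideal.subset_span rfl)
    rcases hJm.lt_or_eq with hJm' | rfl
    · exfalso
      obtain ⟨q, hqmin, hqle⟩ := Ideal.exists_minimalPrimes_le (bot_le : (⊥ : Ideal R) ≤ J)
      rcases eq_or_lt_of_le hqle with rfl | hlt
      · exact aux_nzd_not_mem_minimal hqmin hqmin.1.1 hz hzJ
      · exact aux_no_chain hdim hqmin.1.1 hJp (maximalIdeal.isMaximal R).isPrime hlt hJm'
    · exact le_rfl
  obtain ⟨k, hk⟩ := Ideal.exists_radical_pow_le_of_fg (Ideal.span {z}) (IsNoetherian.noetherian _)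
  exact ⟨k, le_trans (Ideal.pow_right_mono hrad k) hk⟩

end AuxLemmas

/-- the syzygy in a minimal free cover of a maximal Cohen–Macaulay module
over a one-dimensional singular CM local ring has no free direct summand. -/
theorem stmt2 (R : Type*) [CommRing R] [IsNoetherianRing R] [IsLocalRing R]
    (hdim : ringKrullDim R = 1)
    (hdepth : ∃ x ∈ maximalIdeal R, x ∈ nonZeroDivisors R)
    (hsing : ¬ (maximalIdeal R).IsPrincipal)
    (M : Type*) [AddCommGroup M] [Module R M] (hM : IsMCM R M)
    (n : ℕ) (f : (Fin n → R) →ₗ[R] M) (hsurj : Function.Surjective f)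
    (hmin : LinearMap.ker f ≤ (maximalIdeal R) • (⊤ : Submodule R (Fin n → R))) :
    ¬ HasFreeSummand R (LinearMap.ker f) := by
  rintro ⟨p, s, hps⟩
  obtain ⟨x, hx1, hx⟩ := hdepth
  obtain ⟨y, hy1, hy⟩ := hM.2
  obtain ⟨z, hz1, hz, hzM⟩ := aux_exists_reg hdim M hx1 hx hy1 hy
  set e : LinearMap.ker f := s 1 with he_def
  have hpe : p e = 1 := by
    have := LinearMap.congr_fun hps 1
    simpa using this
  have he : ∀ i, (e : Fin n → R) i ∈ maximalIdeal R := fun i =>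
    aux_coord_mem (hmin e.2) i
  have hfe : f (e : Fin n → R) = 0 := e.2
  -- descending step
  have step : ∀ j, maximalIdeal R ^ (j + 1) ≤ Ideal.span {z} →
      maximalIdeal R ^ j ≤ Ideal.span {z} := by
    intro j hj a ha
    have h1 : ∀ i, a * (e : Fin n → R) i ∈ Ideal.span {z} := fun i =>
      hj (by rw [pow_succ]; exact Ideal.mul_mem_mul ha (he i))
    choose v hv using fun i => Ideal.mem_span_singleton'.mp (h1 i)
    have hzv : z • v = a • (e : Fin n → R) := by
      funext i
      simp only [Pi.smul_apply, smul_eq_mul]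
      rw [mul_comm, hv i]
    have hvK : v ∈ LinearMap.ker f := by
      rw [LinearMap.mem_ker]
      have h2 : z • f v = z • (0 : M) := by
        rw [smul_zero, ← map_smul, hzv, map_smul, hfe, smul_zero]
      exact hzM h2
    have hek : a • e = z • (⟨v, hvK⟩ : LinearMap.ker f) := by
      apply Subtype.ext
      push_cast
      exact hzv.symm
    have := congrArg p hek
    rw [map_smul, map_smul, hpe, smul_eq_mul, mul_one, smul_eq_mul] at this
    exact Ideal.mem_span_singleton'.mpr ⟨p ⟨v, hvK⟩, by rw [mul_comm]; exact this.symm⟩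
  -- reduce the power to 1
  obtain ⟨k, hk⟩ := aux_pow_le hdim hz1 hz
  have red : ∀ k, maximalIdeal R ^ k ≤ Ideal.span {z} →
      maximalIdeal R ≤ Ideal.span {z} := by
    intro k
    induction k with
    | zero => intro h; exact le_trans le_top (by rwa [pow_zero, Ideal.one_eq_top] at h)
    | succ k ih => intro h; exact ih (step k h)
  have hm : maximalIdeal R = Ideal.span {z} :=
    le_antisymm (red k hk) (by rwa [Ideal.span_le, Set.singleton_subset_iff])
  exact hsing ⟨z, hm⟩
end

section
/- Let (R, m) be a one-dimensional Cohen--Macaulay local ring which is not regular. Then the maximal ideal m is a first syzygy of a maximal Cohen--Macaulay R-module; that is, there exists a maximal Cohen--Macaulay R-module N and an exact sequence 0 \to m \to R^n \to N \to 0. -/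
open IsLocalRing

lemma nzd_notMem_minimalPrime {R : Type*} [CommRing R] {p : Ideal R}
    (hp : p ∈ minimalPrimes R) {x : R} (hx : x ∈ nonZeroDivisors R) : x ∉ p := by
  have hI : p.IsPrime := hp.1.1
  intro hxp
  have h1 : algebraMap R (Localization p.primeCompl) x ∈
      IsLocalRing.maximalIdeal (Localization p.primeCompl) :=
    (IsLocalization.AtPrime.to_map_mem_maximal_iff _ p x).mpr hxp
  obtain ⟨n, hn⟩ : IsNilpotent (algebraMap R (Localization p.primeCompl) x) := by
    haveI : Ring.KrullDimLE 0 (Localization.AtPrime p) := .of_isLocalization _ hp _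
    exact Ring.KrullDimLE.isNilpotent_iff_mem_maximalIdeal.mpr h1
  rw [← map_pow] at hn
  obtain ⟨c, hc⟩ := (IsLocalization.map_eq_zero_iff p.primeCompl _ _).mp hn
  have hxn : x ^ n ∈ nonZeroDivisors R := pow_mem hx n
  have : (c : R) = 0 := mem_nonZeroDivisors_iff_right.mp hxn _ hc
  exact c.2 (this ▸ p.zero_mem)

open IsLocalRing

lemma prime_eq_maximal {R : Type*} [CommRing R] [IsNoetherianRing R] [IsLocalRing R]
    (hdim : ringKrullDim R = 1) {x : R} (hx : x ∈ nonZeroDivisors R)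
    {p : Ideal R} (hp : p.IsPrime) (hxp : x ∈ p) : p = maximalIdeal R := by
  by_contra hne
  have hpm : p < maximalIdeal R :=
    lt_of_le_of_ne (IsLocalRing.le_maximalIdeal hp.ne_top) hne
  obtain ⟨q, hq, hqp⟩ := Ideal.exists_minimalPrimes_le (I := (⊥ : Ideal R)) (J := p) bot_le
  have hq' : q ∈ minimalPrimes R := hq
  have hqprime : q.IsPrime := hq'.1.1
  have hqlt : q < p := lt_of_le_of_ne hqp (by
    rintro rfl
    exact (by
      have := nzd_notMem_minimalPrime hq' hx
      exact this hxp))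
  let c : LTSeries (PrimeSpectrum R) :=
    ((RelSeries.singleton _ ⟨q, hqprime⟩).snoc ⟨p, hp⟩ hqlt).snoc
      ⟨maximalIdeal R, (IsLocalRing.maximalIdeal.isMaximal R).isPrime⟩ (by
        exact hpm)
  have h2 : (c.length : WithBot ℕ∞) ≤ ringKrullDim R :=
    Order.LTSeries.length_le_krullDim c
  rw [hdim] at h2
  have : c.length = 2 := rfl
  rw [this] at h2
  norm_num at h2


/-- over a one-dimensional non-regular CM local ring, the maximal ideal
is a first syzygy of a maximal Cohen–Macaulay module. -/
theorem stmt3 (R : Type*) [CommRing R] [IsNoetherianRing R] [IsLocalRing R]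
    (hdim : ringKrullDim R = 1)
    (hdepth : ∃ x ∈ maximalIdeal R, x ∈ nonZeroDivisors R)
    (hsing : ¬ (maximalIdeal R).IsPrincipal) :
    IsSyzygyOfMCM R (maximalIdeal R) := by
  classical
  obtain ⟨x, hxm, hxreg⟩ := hdepth
  -- cancellation by x
  have hcx : ∀ {a b : R}, x * a = x * b → a = b := by
    intro a b h
    have h0 : (a - b) * x = 0 := by linear_combination h
    have := mem_nonZeroDivisors_iff_right.mp hxreg _ h0
    exact sub_eq_zero.mp this
  -- the maximal ideal is contained in the radical of (x)
  have hrad : maximalIdeal R ≤ (Ideal.span {x}).radical := by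
    intro a ha
    rw [Ideal.radical_eq_sInf, Ideal.mem_sInf]
    rintro J ⟨hJ1, hJ2⟩
    have : J = maximalIdeal R :=
      prime_eq_maximal hdim hxreg hJ2 (hJ1 (Ideal.subset_span rfl))
    rw [this]; exact ha
  obtain ⟨k, hk⟩ := Ideal.exists_pow_le_of_le_radical_of_fg hrad
    (IsNoetherian.noetherian _)
  -- find y ∉ (x) with y * m ⊆ (x)
  have hPk : ∃ n, maximalIdeal R ^ n ≤ Ideal.span {x} := ⟨k, hk⟩
  set k₀ := Nat.find hPk with hk₀def
  have hk₀ : maximalIdeal R ^ k₀ ≤ Ideal.span {x} := Nat.find_spec hPk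
  have hk₀ne : k₀ ≠ 0 := by
    intro h0
    have h1 : (1 : R) ∈ maximalIdeal R ^ k₀ := by
      rw [h0, pow_zero, Ideal.one_eq_top]; trivial
    have : (1 : R) ∈ Ideal.span {x} := hk₀ h1
    have : IsUnit x := by
      rwa [← Ideal.span_singleton_eq_top, Ideal.eq_top_iff_one]
    exact hxm this
  have hmin : ¬ maximalIdeal R ^ (k₀ - 1) ≤ Ideal.span {x} :=
    Nat.find_min hPk (Nat.sub_lt (Nat.pos_of_ne_zero hk₀ne) one_pos)
  obtain ⟨y, hy1, hy2⟩ := SetLike.not_le_iff_exists.mp hmin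
  have hym : ∀ t ∈ maximalIdeal R, y * t ∈ Ideal.span {x} := by
    intro t ht
    have : y * t ∈ maximalIdeal R ^ (k₀ - 1) * maximalIdeal R :=
      Ideal.mul_mem_mul hy1 ht
    rw [← pow_succ, Nat.sub_add_cancel (Nat.pos_of_ne_zero hk₀ne)] at this
    exact hk₀ this
  -- define g : m → R with x * g t = y * t
  have hyt : ∀ t : maximalIdeal R, ∃ s : R, x * s = y * (t : R) := by
    intro t
    obtain ⟨s, hs⟩ := Ideal.mem_span_singleton'.mp (hym (t : R) t.2)
    exact ⟨s, by rw [mul_comm]; exact hs⟩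
  let gfun : maximalIdeal R → R := fun t => (hyt t).choose
  have hg : ∀ t : maximalIdeal R, x * gfun t = y * (t : R) := fun t => (hyt t).choose_spec
  let g : maximalIdeal R →ₗ[R] R :=
    { toFun := gfun
      map_add' := by
        intro a b
        apply hcx
        rw [hg, mul_add, hg, hg, Submodule.coe_add, mul_add]
      map_smul' := by
        intro r a
        apply hcx
        show x * gfun (r • a) = x * (r • gfun a)
        have h1 := hg (r • a)
        have h2 := hg a
        rw [Submodule.coe_smul, smul_eq_mul] at h1
        rw [smul_eq_mul]
        linear_combination h1 - r * h2 }
  -- the embedding into R²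
  let f : (maximalIdeal R) →ₗ[R] (Fin 2 → R) :=
    LinearMap.pi ![(maximalIdeal R).subtype, g]
  have hf0 : ∀ t : maximalIdeal R, f t 0 = (t : R) := fun t => rfl
  have hf1 : ∀ t : maximalIdeal R, f t 1 = g t := fun t => rfl
  have hginj : Function.Injective f := by
    intro a b h
    have := congrFun h 0
    rw [hf0, hf0] at this
    exact Subtype.ext this
  -- key: x is regular on the cokernel
  have hkey : ∀ v : Fin 2 → R, x • v ∈ LinearMap.range f → v ∈ LinearMap.range f := by
    intro v hv
    obtain ⟨u, hu⟩ := hv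
    have hu0 : (u : R) = x * v 0 := by
      have := congrFun hu 0
      rw [hf0] at this
      simpa using this
    have hu1 : g u = x * v 1 := by
      have := congrFun hu 1
      rw [hf1] at this
      simpa using this
    have hg' : ∀ t : maximalIdeal R, x * g t = y * (t : R) := hg
    have hrel : x * v 1 = y * v 0 := by
      apply hcx
      linear_combination hg' u - x * hu1 + y * hu0
    by_cases h0 : v 0 ∈ maximalIdeal R
    · refine ⟨⟨v 0, h0⟩, ?_⟩
      funext i
      fin_cases i
      · exact hf0 _
      · show f _ 1 = v 1
        rw [hf1]
        apply hcx
        show x * gfun _ = x * v 1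
        rw [hg, hrel]
    · exfalso
      have hunit : IsUnit (v 0) := by
        by_contra hnu
        exact h0 hnu
      obtain ⟨w, hw⟩ := hunit
      apply hy2
      rw [Ideal.mem_span_singleton']
      refine ⟨v 1 * (↑w⁻¹ : R), ?_⟩
      have : y * (v 0 * (↑w⁻¹ : R)) = v 1 * (↑w⁻¹ : R) * x := by
        rw [← mul_assoc, ← hrel]; ring
      rw [← this, ← hw, Units.mul_inv, mul_one]
  refine ⟨2, f, hginj, ⟨inferInstance, x, hxm, ?_⟩⟩
  intro q1 q2 hq
  obtain ⟨v1, rfl⟩ := Submodule.Quotient.mk_surjective _ q1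
  obtain ⟨v2, rfl⟩ := Submodule.Quotient.mk_surjective _ q2
  simp only [← Submodule.Quotient.mk_smul] at hq
  rw [Submodule.Quotient.eq] at hq
  rw [Submodule.Quotient.eq]
  rw [← smul_sub] at hq
  exact hkey _ hq
end

section
/- Let (R, m) be a one-dimensional singular Cohen--Macaulay local ring which is generically Gorenstein. Then the maximal ideal m, viewed as an R-module, is reflexive and has no nonzero free direct summand. -/
open IsLocalRing

section Aux

variable {R : Type*} [CommRing R]

/-- Symmetry: for a linear functional on an ideal, `a * φ b = b * φ a`. -/
lemma aux_sym {I : Ideal R} (φ : I →ₗ[R] R) (a b : I) :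
    (a : R) * φ b = (b : R) * φ a := by
  have h : (a : R) • b = (b : R) • a := Subtype.ext (by simp [mul_comm])
  have h1 : φ ((a : R) • b) = (a : R) * φ b := by rw [map_smul]; rfl
  have h2 : φ ((b : R) • a) = (b : R) * φ a := by rw [map_smul]; rfl
  rw [← h1, ← h2, h]

/-- A nonzerodivisor is in no minimal prime. -/
lemma aux_not_mem_minimal [IsNoetherianRing R] {z : R} (hz : z ∈ nonZeroDivisors R)
    {q : Ideal R} (hq : q ∈ minimalPrimes R) : z ∉ q := by
  intro hzq
  haveI : q.IsPrime := hq.1.1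
  have hnil : IsNilpotent (algebraMap R (Localization q.primeCompl) z) := by
    haveI : Ring.KrullDimLE 0 (Localization.AtPrime q) := .of_isLocalization _ hq _
    rw [Ring.KrullDimLE.isNilpotent_iff_mem_maximalIdeal]
    exact (IsLocalization.AtPrime.to_map_mem_maximal_iff _ q z).mpr hzq
  obtain ⟨n, hn⟩ := hnil
  rw [← map_pow] at hn
  obtain ⟨s, hs⟩ := (IsLocalization.map_eq_zero_iff q.primeCompl _ _).mp hn
  have hs0 : (s : R) = 0 := (pow_mem hz n).2 _ hs
  have : (0 : R) ∈ q.primeCompl := hs0 ▸ s.2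
  exact this q.zero_mem

/-- Socle lemma: if `R` is a Noetherian local ring of Krull dimension 1 and
`z` is a nonzerodivisor in the maximal ideal, then the socle of `R/(z)` is nonzero. -/
lemma aux_socle [IsNoetherianRing R] [IsLocalRing R]
    (hdim : ringKrullDim R = 1) {z : R} (hzm : z ∈ maximalIdeal R)
    (hz : z ∈ nonZeroDivisors R) :
    ∃ r : R, r ∉ Ideal.span {z} ∧ ∀ y ∈ maximalIdeal R, r * y ∈ Ideal.span {z} := by
  set I : Ideal R := Ideal.span {z} with hI
  have hIne : I ≠ ⊤ := by
    intro h
    have : (1 : R) ∈ I := h ▸ Submodule.mem_top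
    have : (1 : R) ∈ maximalIdeal R :=
      (Ideal.span_le.mpr (by simpa using hzm)) this
    exact (maximalIdeal R).ne_top_iff_one.mp (Ideal.IsMaximal.ne_top inferInstance) this
  haveI : Nontrivial (R ⧸ I) := Ideal.Quotient.nontrivial_iff.mpr hIne
  obtain ⟨p, hp⟩ := associatedPrimes.nonempty R (R ⧸ I)
  obtain ⟨hpprime, x, hx⟩ := isAssociatedPrime_iff.mp hp
  rw [Submodule.bot_colon'] at hx
  obtain ⟨r, rfl⟩ := Ideal.Quotient.mk_surjective x
  have hxne : Ideal.Quotient.mk I r ≠ 0 := by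
    intro h
    rw [h] at hx
    rw [Submodule.span_zero_singleton, Submodule.annihilator_bot] at hx
    exact hpprime.ne_top hx
  have hzp : z ∈ p := by
    rw [hx, Submodule.mem_annihilator_span_singleton]
    show z • Ideal.Quotient.mk I r = 0
    have h1 : z • Ideal.Quotient.mk I r = Ideal.Quotient.mk I (z * r) := rfl
    rw [h1, Ideal.Quotient.eq_zero_iff_mem]
    exact Ideal.mul_mem_right r _ (Ideal.subset_span rfl)
  -- p = maximal ideal
  have hpm : p = maximalIdeal R := by
    by_contra hne
    have hple : p ≤ maximalIdeal R := le_maximalIdeal hpprime.ne_top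
    have hplt : p < maximalIdeal R := lt_of_le_of_ne hple hne
    obtain ⟨q, hqmin, hqp⟩ := Ideal.exists_minimalPrimes_le (bot_le : (⊥ : Ideal R) ≤ p)
    have hqz : z ∉ q := aux_not_mem_minimal hz hqmin
    haveI : q.IsPrime := hqmin.1.1
    have hqlt : q < p := lt_of_le_of_ne hqp (fun h => hqz (h ▸ hzp))
    -- build a chain of length 2 in PrimeSpectrum R
    let Q : PrimeSpectrum R := ⟨q, inferInstance⟩
    let P : PrimeSpectrum R := ⟨p, hpprime⟩
    let Mx : PrimeSpectrum R := ⟨maximalIdeal R, inferInstance⟩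
    let c : LTSeries (PrimeSpectrum R) :=
      (RelSeries.singleton _ Q).snoc P (by exact hqlt) |>.snoc Mx
        (by exact hplt)
    have hlen : (c.length : WithBot ℕ∞) ≤ ringKrullDim R :=
      Order.LTSeries.length_le_krullDim c
    have : c.length = 2 := rfl
    rw [this, hdim] at hlen
    norm_num at hlen
  refine ⟨r, fun h => hxne (Ideal.Quotient.eq_zero_iff_mem.mpr h), fun y hy => ?_⟩
  have hyann : y ∈ p := hpm ▸ hy
  rw [hx, Submodule.mem_annihilator_span_singleton] at hyann
  have : Ideal.Quotient.mk I (y * r) = 0 := hyann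
  rw [Ideal.Quotient.eq_zero_iff_mem] at this
  rwa [mul_comm]

/-- Cancellation by a nonzerodivisor. -/
lemma aux_cancel {z : R} (hz : z ∈ nonZeroDivisors R) {a b : R} (h : z * a = z * b) :
    a = b := by
  have h0 : (a - b) * z = 0 := by
    rw [sub_mul, mul_comm a z, mul_comm b z, h, sub_self]
  exact sub_eq_zero.mp (hz.2 _ h0)

/-- Given `k` with `k * m ⊆ (z)`, division by `z` gives a functional on `m`. -/
lemma aux_phi [IsLocalRing R] {z : R} (hz : z ∈ nonZeroDivisors R) {k : R}
    (hk : ∀ y ∈ maximalIdeal R, k * y ∈ Ideal.span {z}) :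
    ∃ φ : (maximalIdeal R) →ₗ[R] R, ∀ y : maximalIdeal R, z * φ y = k * y := by
  have hex : ∀ y : maximalIdeal R, ∃ c : R, k * (y : R) = z * c := by
    intro y
    obtain ⟨c, hc⟩ := (Ideal.mem_span_singleton).mp (hk y y.2)
    exact ⟨c, hc⟩
  choose g hg using hex
  refine ⟨⟨⟨g, ?_⟩, ?_⟩, fun y => (hg y).symm⟩
  · intro a b
    apply aux_cancel hz
    have h1 := hg (a + b)
    have h2 := hg a
    have h3 := hg b
    rw [Submodule.coe_add] at h1
    linear_combination -h1 + h2 + h3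
  · intro r a
    apply aux_cancel hz
    have h1 := hg (r • a)
    have h2 := hg a
    rw [Submodule.coe_smul, smul_eq_mul] at h1
    simp only [RingHom.id_apply, smul_eq_mul]
    linear_combination -h1 + r * h2

end Aux

/-- over a one-dimensional singular CM generically Gorenstein local ring,
the maximal ideal is a reflexive module with no free direct summand. -/
theorem stmt4 (R : Type*) [CommRing R] [IsNoetherianRing R] [IsLocalRing R]
    (hdim : ringKrullDim R = 1)
    (hdepth : ∃ x ∈ maximalIdeal R, x ∈ nonZeroDivisors R)
    (hsing : ¬ (maximalIdeal R).IsPrincipal)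
    (hGor : GenericallyGorenstein R) :
    Module.IsReflexive R (maximalIdeal R) ∧ ¬ HasFreeSummand R (maximalIdeal R) := by
  obtain ⟨z, hzm, hz⟩ := hdepth
  constructor
  · -- Reflexivity
    obtain ⟨r, hrI, hrm⟩ := aux_socle hdim hzm hz
    set ι : (maximalIdeal R) →ₗ[R] R := (maximalIdeal R).subtype with hι
    refine ⟨⟨?_, ?_⟩⟩
    · -- injectivity of the evaluation map
      intro a b h
      have h2 : ι a = ι b := LinearMap.congr_fun h ι
      exact Subtype.ext h2
    · -- surjectivity of the evaluation map
      intro F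
      set y0 : R := F ι with hy0
      have key : ∀ k : R, (∀ y ∈ maximalIdeal R, k * y ∈ Ideal.span {z}) →
          ∃ φ : (maximalIdeal R) →ₗ[R] R,
            (∀ y : maximalIdeal R, z * φ y = k * (y : R)) ∧ z * F φ = k * y0 := by
        intro k hk
        obtain ⟨φ, hφ⟩ := aux_phi hz hk
        refine ⟨φ, hφ, ?_⟩
        have hsm : z • φ = k • ι := by
          ext y
          simp only [LinearMap.smul_apply, smul_eq_mul, hι, Submodule.coe_subtype]
          exact hφ y
        calc z * F φ = F (z • φ) := by rw [map_smul, smul_eq_mul]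
          _ = F (k • ι) := by rw [hsm]
          _ = k * y0 := by rw [map_smul, smul_eq_mul, hy0]
      have hy0m : y0 ∈ maximalIdeal R := by
        by_contra hy0m
        have hu : IsUnit y0 := by
          by_contra hu
          exact hy0m (mem_maximalIdeal y0 |>.mpr hu)
        obtain ⟨u, hu⟩ := hu
        obtain ⟨φr, _, hr2⟩ := key r hrm
        have hmem : r * y0 ∈ Ideal.span {z} :=
          Ideal.mem_span_singleton.mpr ⟨F φr, hr2.symm⟩
        have : r * y0 * (↑u⁻¹ : R) ∈ Ideal.span {z} := Ideal.mul_mem_right _ _ hmem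
        have he : r * y0 * (↑u⁻¹ : R) = r := by
          rw [mul_assoc, ← hu, Units.mul_inv, mul_one]
        rw [he] at this
        exact hrI this
      refine ⟨⟨y0, hy0m⟩, ?_⟩
      apply LinearMap.ext
      intro φ
      set k : R := φ ⟨z, hzm⟩ with hkdef
      have hk : ∀ y ∈ maximalIdeal R, k * y ∈ Ideal.span {z} := by
        intro y hy
        have hsym := aux_sym φ (⟨y, hy⟩ : maximalIdeal R) ⟨z, hzm⟩
        -- hsym : y * φ ⟨z⟩ = z * φ ⟨y⟩
        rw [mul_comm, hkdef]
        exact hsym ▸ Ideal.mem_span_singleton.mpr ⟨φ ⟨y, hy⟩, rfl⟩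
      obtain ⟨φk, hφk, hFk⟩ := key k hk
      have hφeq : φ = φk := by
        apply LinearMap.ext
        intro y
        apply aux_cancel hz
        have hsym := aux_sym φ (⟨z, hzm⟩ : maximalIdeal R) y
        -- hsym : z * φ y = y * φ ⟨z⟩ = y * k
        rw [hφk y, hsym, hkdef, mul_comm]
      apply aux_cancel hz
      show z * φ ⟨y0, hy0m⟩ = z * F φ
      rw [hφeq, hφk ⟨y0, hy0m⟩]
      exact hFk.symm
  · -- No free summand
    rintro ⟨p, s, hps⟩
    apply hsing
    have h1 : p (s 1) = 1 := by
      have := LinearMap.congr_fun hps 1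
      simpa using this
    set a : R := ((s 1 : maximalIdeal R) : R) with ha
    have ham : a ∈ maximalIdeal R := (s 1).2
    have hza : z = a * p ⟨z, hzm⟩ := by
      have e : z • (s 1) = a • (⟨z, hzm⟩ : maximalIdeal R) :=
        Subtype.ext (by simp [ha, mul_comm])
      have he := congrArg p e
      rw [map_smul, map_smul, h1] at he
      simpa [smul_eq_mul] using he
    refine ⟨⟨a, ?_⟩⟩
    apply le_antisymm
    · intro y hy
      rw [Ideal.submodule_span_eq, Ideal.mem_span_singleton]
      refine ⟨p ⟨y, hy⟩, ?_⟩
      apply aux_cancel hz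
      have hsym := aux_sym p (⟨y, hy⟩ : maximalIdeal R) ⟨z, hzm⟩
      -- hsym : y * p ⟨z⟩ = z * p ⟨y⟩
      calc z * y = (a * p ⟨z, hzm⟩) * y := by rw [← hza]
        _ = a * (y * p ⟨z, hzm⟩) := by ring
        _ = a * (z * p ⟨y, hy⟩) := by rw [hsym]
        _ = z * (a * p ⟨y, hy⟩) := by ring
    · rw [Ideal.submodule_span_eq, Ideal.span_le]
      simpa using ham
end

section
/- Let (R, m) be a one-dimensional singular Cohen--Macaulay local ring which is generically Gorenstein. Then the natural map Hom_R(m, m) \to Hom_R(m, R) induced by the inclusion m \subseteq R is an isomorphism; in other words, every R-linear map m \to R has image contained in m. -/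
open IsLocalRing

/-- composition with the inclusion `m ⊆ R` gives an isomorphism
`Hom_R(m,m) ≅ Hom_R(m,R)`; equivalently every `R`-linear map `m → R` lands in `m`. -/
theorem stmt5 (R : Type*) [CommRing R] [IsNoetherianRing R] [IsLocalRing R]
    (hdim : ringKrullDim R = 1)
    (hdepth : ∃ x ∈ maximalIdeal R, x ∈ nonZeroDivisors R)
    (hsing : ¬ (maximalIdeal R).IsPrincipal)
    (hGor : GenericallyGorenstein R) :
    Function.Bijective
      (fun g : (maximalIdeal R →ₗ[R] maximalIdeal R) => (maximalIdeal R).subtype ∘ₗ g) ∧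
    ∀ (f : maximalIdeal R →ₗ[R] R) (x : maximalIdeal R), f x ∈ maximalIdeal R := by
  have key : ∀ (f : maximalIdeal R →ₗ[R] R) (x : maximalIdeal R), f x ∈ maximalIdeal R := by
    intro f x
    by_contra hfx
    have hu : IsUnit (f x) := by
      by_contra h
      exact hfx (h : f x ∈ nonunits R)
    obtain ⟨u, hu⟩ := hu
    set e : maximalIdeal R := (↑u⁻¹ : R) • x with he
    have hfe : f e = 1 := by
      rw [he, map_smul, ← hu, smul_eq_mul]
      exact u.inv_mul
    apply hsing
    refine ⟨(e : R), ?_⟩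
    ext y
    simp only [Ideal.submodule_span_eq, Ideal.mem_span_singleton]
    constructor
    · intro hy
      set z : maximalIdeal R := ⟨y, hy⟩ - f ⟨y, hy⟩ • e with hzdef
      have hz : f z = 0 := by
        rw [hzdef, map_sub, map_smul, hfe, smul_eq_mul, mul_one, sub_self]
      have h1 : (e : R) • z = (z : R) • e := by
        apply Subtype.ext
        show (e : R) • (z : R) = (z : R) • (e : R)
        rw [smul_eq_mul, smul_eq_mul, mul_comm]
      have h2 : (z : R) = 0 := by
        have h3 := congrArg f h1
        rw [map_smul, map_smul, hz, smul_zero, hfe, smul_eq_mul, mul_one] at h3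
        exact h3.symm
      have h4 : y - f ⟨y, hy⟩ * (e : R) = 0 := by
        have : (z : R) = y - f ⟨y, hy⟩ * (e : R) := rfl
        rw [← this, h2]
      exact ⟨f ⟨y, hy⟩, by rw [mul_comm]; exact sub_eq_zero.mp h4⟩
    · rintro ⟨c, rfl⟩
      exact Ideal.mul_mem_right _ _ e.2
  refine ⟨⟨?_, ?_⟩, key⟩
  · intro g g' h
    ext v
    have := congrArg (fun h => h v) h
    exact this
  · intro f
    exact ⟨f.codRestrict _ (key f), rfl⟩
end

section
/- Let (R, m) be a one-dimensional singular Cohen--Macaulay local ring which is generically Gorenstein. Then E = End_R(m) is a maximal Cohen--Macaulay R-module, i.e., a finitely generated R-module of depth 1. -/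
open IsLocalRing

/-- `E = End_R(m)` is a maximal Cohen–Macaulay `R`-module. -/
theorem stmt7 (R : Type*) [CommRing R] [IsNoetherianRing R] [IsLocalRing R]
    (hdim : ringKrullDim R = 1)
    (hdepth : ∃ x ∈ maximalIdeal R, x ∈ nonZeroDivisors R)
    (hsing : ¬ (maximalIdeal R).IsPrincipal)
    (hGor : GenericallyGorenstein R) :
    IsMCM R (Module.End R (maximalIdeal R)) := by
  classical
  constructor
  · -- finiteness: End embeds in m^n
    obtain ⟨n, v, hv⟩ := Module.Finite.exists_fin (R := R) (M := ↥(maximalIdeal R))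
    let F : Module.End R (maximalIdeal R) →ₗ[R] (Fin n → ↥(maximalIdeal R)) :=
      { toFun := fun φ i => φ (v i)
        map_add' := fun φ ψ => rfl
        map_smul' := fun r φ => rfl }
    have hF : Function.Injective F := by
      intro φ ψ h
      apply LinearMap.ext_on hv
      rintro x ⟨i, rfl⟩
      exact congrFun h i
    have := isNoetherian_of_injective F hF
    exact Module.Finite.of_surjective (LinearMap.id (R := R)
      (M := Module.End R (maximalIdeal R))) Function.surjective_id
  · obtain ⟨x, hxm, hx⟩ := hdepth
    refine ⟨x, hxm, fun φ ψ h => ?_⟩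
    ext a
    have h2 := congrArg (fun f : Module.End R (maximalIdeal R) => ((f a : ↥(maximalIdeal R)) : R)) h
    simp only [LinearMap.smul_apply] at h2
    have : x * ((φ a : ↥(maximalIdeal R)) : R) = x * ((ψ a : ↥(maximalIdeal R)) : R) := h2
    exact (mul_cancel_left_mem_nonZeroDivisors hx).mp this
end

section
/- Let (R, m) be a one-dimensional singular Cohen--Macaulay local ring which is generically Gorenstein, and let M be a maximal Cohen--Macaulay R-module with no free direct summand which is a first syzygy of a maximal Cohen--Macaulay module. Then M admits an E-module structure extending its R-module structure, where E = End_R(m). (Bass's lemma.) -/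
open IsLocalRing

section Aux

variable {R : Type*} [CommRing R]

lemma aux_nzd_notMem_minimalPrime {x : R} (hx : x ∈ nonZeroDivisors R)
    {q : Ideal R} (hq : q ∈ minimalPrimes R) : x ∉ q := by
  intro hxq
  have hqprime : q.IsPrime := hq.1.1
  set S : Submonoid R := q.primeCompl ⊔ Submonoid.powers x with hS
  have hdisj : Disjoint ((⊥ : Ideal R) : Set R) (S : Set R) := by
    rw [Set.disjoint_left]
    rintro a ha haS
    rw [SetLike.mem_coe, Ideal.mem_bot] at ha
    subst ha
    rw [SetLike.mem_coe, hS, Submonoid.mem_sup] at haS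
    obtain ⟨b, hb, c, hc, hbc⟩ := haS
    obtain ⟨k, rfl⟩ := hc
    have hb0 : b = 0 := (mem_nonZeroDivisors_iff.mp (pow_mem hx k)).2 b hbc
    exact hb (hb0 ▸ q.zero_mem)
  obtain ⟨p, hp, -, hpd⟩ := Ideal.exists_le_prime_disjoint _ S hdisj
  have hpq : p ≤ q := by
    intro a hap
    by_contra h
    exact Set.disjoint_left.mp hpd hap (SetLike.le_def.mp le_sup_left h)
  have hqp : q ≤ p := hq.2 ⟨hp, bot_le⟩ hpq
  exact Set.disjoint_left.mp hpd (hqp hxq)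
    (SetLike.le_def.mp le_sup_right (Submonoid.mem_powers x))

lemma aux_prime_eq_max [IsLocalRing R] (hdim : ringKrullDim R = 1)
    {p : Ideal R} (hp : p.IsPrime) {x : R} (hx : x ∈ nonZeroDivisors R) (hxp : x ∈ p) :
    p = maximalIdeal R := by
  by_contra hne
  haveI := hp
  obtain ⟨q, hq, hqp⟩ := Ideal.exists_minimalPrimes_le (bot_le : (⊥ : Ideal R) ≤ p)
  have hqprime : q.IsPrime := hq.1.1
  have h1 : q < p := lt_of_le_of_ne hqp
    (fun h => aux_nzd_notMem_minimalPrime hx hq (h ▸ hxp))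
  have h2 : p < maximalIdeal R := lt_of_le_of_ne (le_maximalIdeal hp.ne_top) hne
  let c : LTSeries (PrimeSpectrum R) :=
    { length := 2
      toFun := ![⟨q, hqprime⟩, ⟨p, hp⟩, ⟨maximalIdeal R, inferInstance⟩]
      step := by
        intro i
        fin_cases i
        · exact h1
        · exact h2 }
  have hle := Order.LTSeries.length_le_krullDim c
  rw [show Order.krullDim (PrimeSpectrum R) = ringKrullDim R from rfl, hdim] at hle
  norm_num [c] at hle

lemma aux_reg [IsNoetherianRing R] [IsLocalRing R] (hdim : ringKrullDim R = 1)
    {N : Type*} [AddCommGroup N] [Module R N] {y : R} (hym : y ∈ maximalIdeal R)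
    (hyreg : IsSMulRegular N y) {x : R} (hx : x ∈ nonZeroDivisors R) :
    IsSMulRegular N x := by
  have key : ∀ v : N, x • v = 0 → v = 0 := by
    intro v hv
    by_contra hv0
    obtain ⟨P, hP, hle⟩ :=
      exists_le_isAssociatedPrime_of_isNoetherianRing R v hv0
    obtain ⟨hPprime, w, hw⟩ := isAssociatedPrime_iff.mp hP
    have hmem : ∀ r : R, r ∈ P ↔ r • w = 0 := fun r => by
      rw [hw, Submodule.mem_colon_singleton, Submodule.mem_bot]
    have hw0 : w ≠ 0 := by
      intro h
      exact hPprime.ne_top ((Ideal.eq_top_iff_one P).mpr ((hmem 1).mpr (by simp [h])))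
    have hxP : x ∈ P := hle (Submodule.mem_colon_singleton.mpr (by rw [Submodule.mem_bot]; exact hv))
    have hPm : P = maximalIdeal R := aux_prime_eq_max hdim hPprime hx hxP
    have hyP : y ∈ P := hPm ▸ hym
    exact hw0 (hyreg (show y • w = y • 0 by rw [(hmem y).mp hyP, smul_zero]))
  intro a b hab
  have h0 : x • (a - b) = 0 := by
    rw [smul_sub, show x • a = x • b from hab, sub_self]
  exact sub_eq_zero.mp (key _ h0)

end Aux

/-- Bass: an MCM module without free summand which is a first syzygy of an
MCM module admits a module structure over `E = End_R(m)` extending the `R`-structure,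
encoded as a ring homomorphism `E →+* End_R(M)` compatible with the map `R → E`. -/
theorem stmt9 (R : Type*) [CommRing R] [IsNoetherianRing R] [IsLocalRing R]
    (hdim : ringKrullDim R = 1)
    (hdepth : ∃ x ∈ maximalIdeal R, x ∈ nonZeroDivisors R)
    (hsing : ¬ (maximalIdeal R).IsPrincipal)
    (hGor : GenericallyGorenstein R)
    (M : Type*) [AddCommGroup M] [Module R M]
    (hM : IsMCM R M) (hMfree : ¬ HasFreeSummand R M) (hMsyz : IsSyzygyOfMCM R M) :
    ∃ ρ : Module.End R (maximalIdeal R) →+* Module.End R M,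
      ∀ r : R, ρ (r • 1) = r • 1 := by
  obtain ⟨x, hxm, hxnzd⟩ := hdepth
  obtain ⟨n, f, hfinj, hNfin, y, hym, hyreg⟩ := hMsyz
  -- Step A: every coordinate of `f` lands in the maximal ideal
  have hland : ∀ (u : M) (i : Fin n), f u i ∈ maximalIdeal R := by
    intro u i
    by_contra h
    have hunit : IsUnit (f u i) := by
      simpa [mem_maximalIdeal, mem_nonunits_iff] using h
    obtain ⟨c, hc⟩ := hunit.exists_left_inv
    apply hMfree
    refine ⟨(LinearMap.proj i).comp f, LinearMap.toSpanSingleton R M (c • u), ?_⟩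
    apply LinearMap.ext_ring
    simp [LinearMap.toSpanSingleton_apply, hc]
  -- the candidate image of `f u` under `φ`
  set w : Module.End R (maximalIdeal R) → M → (Fin n → R) :=
    fun φ u i => (φ ⟨f u i, hland u i⟩ : R) with hwdef
  -- Step B: x • w φ u = (φ x) • f u
  have hxw : ∀ φ u, x • w φ u = (φ ⟨x, hxm⟩ : R) • f u := by
    intro φ u
    funext i
    have h1 : x • (⟨f u i, hland u i⟩ : maximalIdeal R) = (f u i) • ⟨x, hxm⟩ :=
      Subtype.ext (by simp [mul_comm])
    calc (x • w φ u) i = x • ((φ ⟨f u i, hland u i⟩ : R)) := rfl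
      _ = ((φ (x • ⟨f u i, hland u i⟩) : R)) := by rw [map_smul]; rfl
      _ = ((φ ((f u i) • ⟨x, hxm⟩) : R)) := by rw [h1]
      _ = (f u i) • (φ ⟨x, hxm⟩ : R) := by rw [map_smul]; rfl
      _ = ((φ ⟨x, hxm⟩ : R) • f u) i := by simp [mul_comm]
  have hxreg : IsSMulRegular ((Fin n → R) ⧸ LinearMap.range f) x :=
    aux_reg hdim hym hyreg hxnzd
  have hwK : ∀ φ u, w φ u ∈ LinearMap.range f := by
    intro φ u
    set Q := LinearMap.range f with hQ
    have h1 : x • Q.mkQ (w φ u) = x • (0 : (Fin n → R) ⧸ Q) := by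
      rw [smul_zero, ← map_smul, hxw, map_smul]
      have : Q.mkQ (f u) = 0 := (Submodule.Quotient.mk_eq_zero Q).mpr ⟨u, rfl⟩
      rw [Submodule.mkQ_apply] at this ⊢
      rw [this, smul_zero]
    have h2 : Q.mkQ (w φ u) = 0 := hxreg h1
    rwa [Submodule.mkQ_apply, Submodule.Quotient.mk_eq_zero] at h2
  -- Step C: build the maps
  let e : M ≃ₗ[R] LinearMap.range f := LinearEquiv.ofInjective f hfinj
  let g : Module.End R (maximalIdeal R) → M → M :=
    fun φ u => e.symm ⟨w φ u, hwK φ u⟩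
  have hfg : ∀ φ u, f (g φ u) = w φ u := by
    intro φ u
    have : (e (e.symm ⟨w φ u, hwK φ u⟩) : Fin n → R) = w φ u := by
      rw [e.apply_symm_apply]
    rwa [LinearEquiv.ofInjective_apply] at this
  have hwadd : ∀ φ u v, w φ (u + v) = w φ u + w φ v := by
    intro φ u v
    funext i
    have h1 : (⟨f (u + v) i, hland (u+v) i⟩ : maximalIdeal R)
        = ⟨f u i, hland u i⟩ + ⟨f v i, hland v i⟩ := Subtype.ext (by simp)
    show (φ ⟨f (u+v) i, hland (u+v) i⟩ : R) = (φ ⟨f u i, _⟩ : R) + (φ ⟨f v i, _⟩ : R)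
    rw [h1, map_add]
    rfl
  have hwsmul : ∀ φ (r : R) u, w φ (r • u) = r • w φ u := by
    intro φ r u
    funext i
    have h1 : (⟨f (r • u) i, hland (r • u) i⟩ : maximalIdeal R)
        = r • ⟨f u i, hland u i⟩ := Subtype.ext (by simp)
    show (φ ⟨f (r • u) i, hland (r • u) i⟩ : R) = r • (φ ⟨f u i, hland u i⟩ : R)
    rw [h1, map_smul]
    rfl
  let W : Module.End R (maximalIdeal R) → Module.End R M := fun φ =>
    { toFun := g φ
      map_add' := fun u v => hfinj (by rw [map_add, hfg, hfg, hfg, hwadd])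
      map_smul' := fun r u => by
        simp only [RingHom.id_apply]
        exact hfinj (by rw [map_smul, hfg, hfg, hwsmul]) }
  have hWapp : ∀ φ u, W φ u = g φ u := fun _ _ => rfl
  have hfW : ∀ φ u, f (W φ u) = w φ u := fun φ u => hfg φ u
  refine ⟨{ toFun := W
            map_one' := ?_
            map_mul' := ?_
            map_zero' := ?_
            map_add' := ?_ }, ?_⟩
  · apply LinearMap.ext
    intro u
    apply hfinj
    rw [hfW]
    rfl
  · intro φ ψ
    apply LinearMap.ext
    intro u
    apply hfinj
    show f (W (φ * ψ) u) = f (W φ (W ψ u))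
    rw [hfW, hfW]
    funext i
    show ((φ * ψ) ⟨f u i, hland u i⟩ : R) = (φ ⟨f (W ψ u) i, hland _ i⟩ : R)
    have h1 : (⟨f (W ψ u) i, hland _ i⟩ : maximalIdeal R) = ψ ⟨f u i, hland u i⟩ := by
      apply Subtype.ext
      show f (W ψ u) i = _
      rw [hfW]
    rw [h1]
    rfl
  · apply LinearMap.ext
    intro u
    apply hfinj
    show f (W 0 u) = f ((0 : Module.End R M) u)
    rw [hfW, LinearMap.zero_apply, map_zero]
    rfl
  · intro φ ψ
    apply LinearMap.ext
    intro u
    apply hfinj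
    show f (W (φ + ψ) u) = f (W φ u + W ψ u)
    rw [map_add, hfW, hfW, hfW]
    funext i
    show ((φ + ψ) ⟨f u i, hland u i⟩ : R) = _
    simp [Pi.add_apply]
    rfl
  · intro r
    apply LinearMap.ext
    intro u
    apply hfinj
    show f (W (r • 1) u) = f ((r • (1 : Module.End R M)) u)
    rw [hfW]
    funext i
    show ((r • (1 : Module.End R (maximalIdeal R))) ⟨f u i, hland u i⟩ : R)
      = f ((r • (1 : Module.End R M)) u) i
    rw [LinearMap.smul_apply, Module.End.one_apply, LinearMap.smul_apply, Module.End.one_apply,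
      map_smul]
    simp
end

section
/- Let (R, m) be a one-dimensional singular Cohen--Macaulay local ring which is generically Gorenstein, let E = End_R(m), and let M be a maximal Cohen--Macaulay R-module with no free summand that is a first syzygy of a maximal Cohen--Macaulay module. Then there exists an exact sequence 0 \to M \to m^{\oplus n} \to N \to 0 of R-modules where N is a maximal Cohen--Macaulay R-module admitting a compatible E-module structure. -/
open IsLocalRing

set_option maxHeartbeats 1000000

/-- an MCM module without free summand which is a first syzygy of an MCM
module embeds into a finite direct sum of copies of `m` with cokernel an MCM module
carrying a compatible `E = End_R(m)`-module structure. -/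
theorem stmt10 (R : Type*) [CommRing R] [IsNoetherianRing R] [IsLocalRing R]
    (hdim : ringKrullDim R = 1)
    (hdepth : ∃ x ∈ maximalIdeal R, x ∈ nonZeroDivisors R)
    (hsing : ¬ (maximalIdeal R).IsPrincipal)
    (hGor : GenericallyGorenstein R)
    (M : Type*) [AddCommGroup M] [Module R M]
    (hM : IsMCM R M) (hMfree : ¬ HasFreeSummand R M) (hMsyz : IsSyzygyOfMCM R M) :
    ∃ (n : ℕ) (f : M →ₗ[R] (Fin n → maximalIdeal R)), Function.Injective f ∧
      IsMCM R ((Fin n → maximalIdeal R) ⧸ LinearMap.range f) ∧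
      ∃ ρ : Module.End R (maximalIdeal R) →+*
          Module.End R ((Fin n → maximalIdeal R) ⧸ LinearMap.range f),
        ∀ r : R, ρ (r • 1) = r • 1 := by
  classical
  obtain ⟨n, f, hfinj, hNfin, x, hxm, hxreg⟩ := hMsyz
  -- Step 1: every coordinate of `f` lands in the maximal ideal
  have hmem : ∀ (i : Fin n) (u : M), f u i ∈ maximalIdeal R := by
    intro i u
    by_contra hcon
    have htop : LinearMap.range ((LinearMap.proj i : (Fin n → R) →ₗ[R] R).comp f) = ⊤ := by
      by_contra htop
      exact hcon (IsLocalRing.le_maximalIdeal htop ⟨u, rfl⟩)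
    have h1 : (1 : R) ∈ LinearMap.range ((LinearMap.proj i : (Fin n → R) →ₗ[R] R).comp f) := by
      rw [htop]; trivial
    obtain ⟨v, hv⟩ := h1
    refine hMfree ⟨(LinearMap.proj i : (Fin n → R) →ₗ[R] R).comp f,
      LinearMap.toSpanSingleton R M v, ?_⟩
    apply LinearMap.ext_ring
    simpa using hv
  -- Step 2: the factorization `g : M → mⁿ`
  set g : M →ₗ[R] (Fin n → maximalIdeal R) :=
    LinearMap.pi (fun i => LinearMap.codRestrict (maximalIdeal R)
      ((LinearMap.proj i : (Fin n → R) →ₗ[R] R).comp f) (hmem i)) with hg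
  have hgcoe : ∀ (u : M) (i : Fin n), ((g u i : R)) = f u i := by
    intro u i; rfl
  have hginj : Function.Injective g := by
    intro a b hab
    apply hfinj
    funext i
    have := congrFun hab i
    have h2 : ((g a i : R)) = ((g b i : R)) := by rw [this]
    rwa [hgcoe, hgcoe] at h2
  -- Key: if `x • v` is in the image of `M` in `Rⁿ` for `v : mⁿ`, then `v ∈ range g`
  have key : ∀ v : Fin n → maximalIdeal R,
      (fun i => x * (v i : R)) ∈ LinearMap.range f → v ∈ LinearMap.range g := by
    intro v hv
    have hsm : (fun i => x * (v i : R)) = x • (fun i => (v i : R)) := by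
      funext i; simp [smul_eq_mul]
    rw [hsm] at hv
    have h1 : x • (Submodule.Quotient.mk (p := LinearMap.range f) (fun i => (v i : R)))
        = x • (0 : (Fin n → R) ⧸ LinearMap.range f) := by
      rw [smul_zero, ← Submodule.Quotient.mk_smul, Submodule.Quotient.mk_eq_zero]
      exact hv
    have h2 := hxreg h1
    rw [Submodule.Quotient.mk_eq_zero] at h2
    obtain ⟨u, hu⟩ := h2
    refine ⟨u, ?_⟩
    funext i
    exact Subtype.ext (by rw [hgcoe]; exact congrFun hu i)
  -- Finiteness of the cokernel
  have hmfin : Module.Finite R (maximalIdeal R) :=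
    Module.Finite.iff_fg.2 (IsNoetherian.noetherian _)
  have hCfin : Module.Finite R ((Fin n → maximalIdeal R) ⧸ LinearMap.range g) := by
    infer_instance
  -- Regularity of `x` on the cokernel
  have hreg : IsSMulRegular ((Fin n → maximalIdeal R) ⧸ LinearMap.range g) x := by
    intro a b hab
    have hzero : ∀ c : (Fin n → maximalIdeal R) ⧸ LinearMap.range g, x • c = 0 → c = 0 := by
      intro c hc
      obtain ⟨v, rfl⟩ := Submodule.Quotient.mk_surjective _ c
      rw [← Submodule.Quotient.mk_smul, Submodule.Quotient.mk_eq_zero] at hc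
      obtain ⟨w, hw⟩ := hc
      rw [Submodule.Quotient.mk_eq_zero]
      apply key
      refine ⟨w, ?_⟩
      funext i
      have := congrFun hw i
      calc f w i = ((g w i : R)) := (hgcoe w i).symm
        _ = (((x • v) i : R)) := by rw [this]
        _ = x * (v i : R) := rfl
    have hab' : x • a = x • b := hab
    have : x • (a - b) = 0 := by rw [smul_sub, hab', sub_self]
    have := hzero _ this
    rwa [sub_eq_zero] at this
  -- The commutation identity in End(m)
  have hcomm : ∀ (φ : Module.End R (maximalIdeal R)) (a b : maximalIdeal R),
      (a : R) • φ b = (b : R) • φ a := by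
    intro φ a b
    rw [← map_smul, ← map_smul]
    congr 1
    ext
    simp [mul_comm]
  -- Componentwise action of End(m) on mⁿ
  set Φ : Module.End R (maximalIdeal R) → ((Fin n → maximalIdeal R) →ₗ[R] (Fin n → maximalIdeal R)) :=
    fun φ => LinearMap.pi (fun i => φ.comp (LinearMap.proj i)) with hΦ
  have hΦapp : ∀ φ v i, Φ φ v i = φ (v i) := by intro φ v i; rfl
  -- Stability of range g under Φ φ
  have stab : ∀ φ : Module.End R (maximalIdeal R),
      LinearMap.range g ≤ Submodule.comap (Φ φ) (LinearMap.range g) := by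
    intro φ c hc
    obtain ⟨u, rfl⟩ := hc
    simp only [Submodule.mem_comap]
    apply key
    set x' : maximalIdeal R := ⟨x, hxm⟩ with hx'
    refine ⟨((φ x' : R)) • u, ?_⟩
    funext i
    have e2 : ((x' : R)) • φ (g u i) = ((g u i : R)) • φ x' := hcomm φ x' (g u i)
    have e3 : x * ((φ (g u i) : R)) = ((g u i : R)) * ((φ x' : R)) := congrArg Subtype.val e2
    show f ((φ x' : R) • u) i = x * ((Φ φ (g u)) i : R)
    rw [map_smul]
    show (φ x' : R) * f u i = x * ((φ (g u i) : R))
    rw [e3, ← hgcoe]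
    exact mul_comm _ _
  refine ⟨n, g, hginj, ⟨hCfin, x, hxm, hreg⟩, ?_⟩
  refine ⟨{ toFun := fun φ => Submodule.mapQ _ _ (Φ φ) (stab φ),
            map_one' := ?_, map_mul' := ?_, map_zero' := ?_, map_add' := ?_ }, ?_⟩
  · apply Submodule.linearMap_qext
    apply LinearMap.ext
    intro v
    simp only [LinearMap.comp_apply, Submodule.mkQ_apply, Submodule.mapQ_apply]
    rfl
  · intro φ ψ
    apply Submodule.linearMap_qext
    apply LinearMap.ext
    intro v
    simp only [LinearMap.comp_apply, Submodule.mkQ_apply, Submodule.mapQ_apply,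
      Module.End.mul_apply]
    rfl
  · apply Submodule.linearMap_qext
    apply LinearMap.ext
    intro v
    simp only [LinearMap.comp_apply, Submodule.mkQ_apply, Submodule.mapQ_apply,
      LinearMap.zero_apply]
    have h0 : Φ 0 v = 0 := by funext i; rfl
    rw [h0, Submodule.Quotient.mk_zero]
  · intro φ ψ
    apply Submodule.linearMap_qext
    apply LinearMap.ext
    intro v
    simp only [LinearMap.comp_apply, Submodule.mkQ_apply, Submodule.mapQ_apply,
      LinearMap.add_apply]
    rw [← Submodule.Quotient.mk_add]
    rfl
  · intro r
    apply LinearMap.ext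
    intro c
    obtain ⟨v, rfl⟩ := Submodule.Quotient.mk_surjective _ c
    have h1 : Φ (r • 1) v = r • v := by
      funext i
      rw [hΦapp]
      rfl
    simp only [RingHom.coe_mk, MonoidHom.coe_mk, OneHom.coe_mk, Submodule.mapQ_apply,
      LinearMap.smul_apply, Module.End.one_apply, h1, Submodule.Quotient.mk_smul]
end

section
/- Let (R, m) be a one-dimensional complete singular Cohen--Macaulay local ring with infinite residue field, generically Gorenstein, and let K be an R-submodule of Q(R) with R \subseteq K \subseteq \bar{R} which is a canonical module of R. If (K : m) = (m : m) (as submodules of Q(R)), then (m : K) = m. -/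
open IsLocalRing

/-- The colon (residuated quotient) `(X : Y) = {q ∈ Q : qY ⊆ X}` of two `R`-submodules of
an `R`-algebra `Q`. -/
def qcolon {R : Type*} [CommRing R] {Q : Type*} [CommRing Q] [Algebra R Q]
    (X Y : Submodule R Q) : Submodule R Q where
  carrier := {q | ∀ y ∈ Y, q * y ∈ X}
  add_mem' := by
    intro a b ha hb y hy
    simpa [add_mul] using X.add_mem (ha y hy) (hb y hy)
  zero_mem' := by
    intro y hy
    simpa using X.zero_mem
  smul_mem' := by
    intro r q hq y hy
    simpa [smul_mul_assoc] using X.smul_mem r (hq y hy)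

/-- A fractional canonical ideal of the one-dimensional CM local ring `R`: a finitely
generated submodule `K` of the total quotient ring containing a unit such that
`K : (K : J) = J` for every such submodule `J`. -/
def IsCanonicalIdeal (R : Type*) [CommRing R] (K : Submodule R (FractionRing R)) : Prop :=
  K.FG ∧ (∃ k ∈ K, IsUnit k) ∧
    ∀ J : Submodule R (FractionRing R), J.FG → (∃ x ∈ J, IsUnit x) →
      qcolon K (qcolon K J) = J

/-- A canonical module of the one-dimensional CM local ring `R`: a module isomorphic to a
fractional canonical ideal. -/
def IsCanonicalModule (R : Type*) [CommRing R] (W : Type*) [AddCommGroup W] [Module R W] : Prop :=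
  ∃ K : Submodule R (FractionRing R), IsCanonicalIdeal R K ∧ Nonempty (W ≃ₗ[R] K)

/-- for a canonical ideal `R ⊆ K ⊆ R̄` of a complete one-dimensional
singular CM generically Gorenstein local ring with infinite residue field,
`(K : m) = (m : m)` implies `(m : K) = m`. -/
theorem stmt13 (R : Type*) [CommRing R] [IsNoetherianRing R] [IsLocalRing R]
    [IsAdicComplete (maximalIdeal R) R]
    (hdim : ringKrullDim R = 1)
    (hdepth : ∃ x ∈ maximalIdeal R, x ∈ nonZeroDivisors R)
    (hsing : ¬ (maximalIdeal R).IsPrincipal)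
    (hGor : GenericallyGorenstein R)
    (hres : Infinite (ResidueField R))
    (K : Submodule R (FractionRing R))
    (hRK : ∀ a : R, algebraMap R (FractionRing R) a ∈ K)
    (hKint : (K : Set (FractionRing R)) ⊆
      (integralClosure R (FractionRing R) : Set (FractionRing R)))
    (hK : IsCanonicalIdeal R K)
    (hyp : qcolon K (Submodule.map (Algebra.linearMap R (FractionRing R)) (maximalIdeal R)) =
      qcolon (Submodule.map (Algebra.linearMap R (FractionRing R)) (maximalIdeal R))
        (Submodule.map (Algebra.linearMap R (FractionRing R)) (maximalIdeal R))) :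
    qcolon (Submodule.map (Algebra.linearMap R (FractionRing R)) (maximalIdeal R)) K =
      Submodule.map (Algebra.linearMap R (FractionRing R)) (maximalIdeal R) := by
  set Q := FractionRing R
  set m' := Submodule.map (Algebra.linearMap R Q) (maximalIdeal R) with hm'
  apply le_antisymm
  · intro q hq
    have h1 : (1 : Q) ∈ K := by simpa using hRK 1
    simpa using hq 1 h1
  · rintro x hx
    obtain ⟨a, ha, rfl⟩ := hx
    intro k hk
    -- k ∈ K ⊆ qcolon K m' = qcolon m' m' by hyp
    have hkK : k ∈ qcolon K m' := by
      rintro y ⟨b, hb, rfl⟩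
      have : k * (Algebra.linearMap R Q) b = b • k := by
        simp [Algebra.smul_def, mul_comm]
        rfl
      rw [this]
      exact K.smul_mem b hk
    rw [hyp] at hkK
    have := hkK _ ⟨a, ha, rfl⟩
    rwa [mul_comm] at this
end
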